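/- Let G be a connected bipartite graph with bipartition (X,Y) and n ≥ 3 an integer. If |X| ≥ δ(G)+1, |Y| ≥ δ(G)+1, and κ(G) > (2/n)·δ(G), then the graph G̃_n is super connected. -/

import Mathlib

open SimpleGraph

universe u v

variable {α : Type u} {β : Type v}

/-- Direct (tensor) product of two simple graphs. -/
def SimpleGraph.tensorProd (G : SimpleGraph α) (H : SimpleGraph β) :
    SimpleGraph (α × β) where
  Adj x y := G.Adj x.1 y.1 ∧ H.Adj x.2 y.2
  symm := ⟨fun x y h => ⟨h.1.symm, h.2.symm⟩⟩
  loopless := ⟨fun x h => G.loopless.irrefl x.1 h.1⟩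

/-- Direct (tensor) product of a family of simple graphs. -/
def SimpleGraph.piTensorProd {ι : Type*} {V : ι → Type*}
    (G : ∀ i, SimpleGraph (V i)) : SimpleGraph (∀ i, V i) where
  Adj f g := f ≠ g ∧ ∀ i, (G i).Adj (f i) (g i)
  symm := ⟨fun f g h => ⟨h.1.symm, fun i => (h.2 i).symm⟩⟩
  loopless := ⟨fun f h => h.1 rfl⟩

/-- `S` is a vertex cut of `G`: deleting `S` leaves a disconnected graph. -/
def SimpleGraph.IsVertexCut (G : SimpleGraph α) (S : Set α) : Prop :=
  ¬ (G.induce Sᶜ).Connected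

/-- Vertex connectivity: minimum size of a set `S` such that `G - S` is
disconnected or has at most one vertex. -/
noncomputable def SimpleGraph.vConn (G : SimpleGraph α) : ℕ :=
  sInf {n | ∃ S : Set α, S.ncard = n ∧
    (G.IsVertexCut S ∨ Nat.card α ≤ n + 1)}

/-- Minimum degree (via neighbor set cardinalities). -/
noncomputable def SimpleGraph.minDeg (G : SimpleGraph α) : ℕ :=
  sInf {d | ∃ v, (G.neighborSet v).ncard = d}

/-- A minimum vertex cut. -/
def SimpleGraph.IsMinVertexCut (G : SimpleGraph α) (S : Set α) : Prop :=
  G.IsVertexCut S ∧ S.ncard = G.vConn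

/-- `G` is super connected: every minimum vertex cut is the neighborhood of a
vertex of minimum degree. -/
def SimpleGraph.SuperConnected (G : SimpleGraph α) : Prop :=
  ∀ S : Set α, G.IsMinVertexCut S →
    ∃ v, (G.neighborSet v).ncard = G.minDeg ∧ S = G.neighborSet v

/-- `(X, Y)` is a bipartition of `G`. -/
def SimpleGraph.IsBipartition (G : SimpleGraph α) (X Y : Set α) : Prop :=
  Disjoint X Y ∧ X ∪ Y = Set.univ ∧
    ∀ u v, G.Adj u v → (u ∈ X ∧ v ∈ Y) ∨ (u ∈ Y ∧ v ∈ X)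

/-- The graph `G̃ₙ`: vertex set `α × ZMod n`, with for each `i` a copy `Hᵢ`
of `G` on `(Xᵢ, Yᵢ)` and a copy `Hᵢ'` of `G` on `(Xᵢ₊₁, Yᵢ)`. -/
def tildeG (G : SimpleGraph α) (X Y : Set α) (n : ℕ) :
    SimpleGraph (α × ZMod n) where
  Adj a b := G.Adj a.1 b.1 ∧
    ((a.1 ∈ X ∧ b.1 ∈ Y ∧ (a.2 = b.2 ∨ a.2 = b.2 + 1)) ∨
     (a.1 ∈ Y ∧ b.1 ∈ X ∧ (b.2 = a.2 ∨ b.2 = a.2 + 1)))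
  symm := ⟨fun a b h => ⟨h.1.symm, by tauto⟩⟩
  loopless := ⟨fun a h => G.loopless.irrefl a.1 h.1⟩

/-!
Put `Xᵢ` in layer `2i` and `Yᵢ` in layer `2i + 1` of the cycle `ZMod (2n)`. Each pair of
consecutive layers spans a copy of `G`, and every edge of `G̃ₙ` lies in such a copy; hence
`δ(G̃ₙ) ≤ 2δ` and a minimum vertex cut `S` has at most `2δ` vertices. It remains to find a vertex
all of whose neighbours lie in `S`; suppose there is none.

If `S` has fewer than `κ` vertices in the layers `c, c + 1`, the copy of `G` on them stays
connected in `G̃ₙ - S`. If a component of `G̃ₙ - S` meets layer `c` but not an adjacent layer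
`c'`, then `S` contains a copy of a neighbourhood of `G` inside `c'`, so `c'` is heavy: it holds at
least `δ` vertices of `S`. With at most one heavy layer, every component meets every light layer,
so every pair of consecutive layers holds `κ` vertices of `S`; summing, `2nκ ≤ 2|S| ≤ 4δ`, against
`nκ > 2δ`. With two heavy layers, they hold all of `S`; as `n ≥ 3`, one of the two arcs between
them has at least two layers, and through it `G̃ₙ - S` is connected.
-/

namespace SimpleGraph

variable {V : Type*} {H : SimpleGraph V}

lemma vConn_le_ncard {S : Set V} (h : H.IsVertexCut S) : H.vConn ≤ S.ncard :=
  Nat.sInf_le ⟨S, rfl, Or.inl h⟩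

lemma connected_induce_compl_of_ncard_lt_vConn {T : Set V} (h : T.ncard < H.vConn) :
    (H.induce Tᶜ).Connected := by
  by_contra hT
  exact (vConn_le_ncard hT).not_gt h

lemma finite_of_vConn_pos (h : 0 < H.vConn) : Finite V := by
  refine Nat.finite_of_card_ne_zero fun h0 => h.ne' (Nat.eq_zero_of_le_zero ?_)
  exact Nat.sInf_le ⟨∅, Set.ncard_empty _, Or.inr (by omega)⟩

lemma minDeg_le_ncard_neighborSet (v : V) : H.minDeg ≤ (H.neighborSet v).ncard :=
  Nat.sInf_le ⟨v, rfl⟩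

lemma exists_ncard_neighborSet_eq_minDeg [Nonempty V] :
    ∃ v, (H.neighborSet v).ncard = H.minDeg :=
  Nat.sInf_mem (s := {d | ∃ v, (H.neighborSet v).ncard = d}) ⟨_, Classical.arbitrary V, rfl⟩

lemma isVertexCut_neighborSet {a b : V} (hab : b ≠ a) (hb : b ∉ H.neighborSet a) :
    H.IsVertexCut (H.neighborSet a) := by
  intro hconn
  obtain ⟨w⟩ := hconn.preconnected (⟨a, H.notMem_neighborSet_self⟩ : ↥(H.neighborSet a)ᶜ) ⟨b, hb⟩
  cases w with
  | nil => exact hab rfl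
  | cons h _ => exact (Set.mem_compl_iff _ _).1 (Subtype.prop _) h

lemma vConn_le_minDeg (h : H.minDeg + 2 ≤ Nat.card V) : H.vConn ≤ H.minDeg := by
  have : Finite V := Nat.finite_of_card_ne_zero (by omega)
  have : Nonempty V := (Nat.card_pos_iff.1 (by omega)).1
  obtain ⟨a, ha⟩ := exists_ncard_neighborSet_eq_minDeg (H := H)
  obtain ⟨b, hb⟩ : ∃ b, b ∉ H.neighborSet a ∪ {a} := by
    by_contra! hall
    have := Set.ncard_le_ncard (fun x (_ : x ∈ Set.univ) => hall x)
    rw [Set.ncard_univ] at this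
    have := Set.ncard_union_le (H.neighborSet a) {a}
    rw [Set.ncard_singleton] at this
    omega
  rw [Set.mem_union, not_or, Set.mem_singleton_iff] at hb
  exact ha ▸ vConn_le_ncard (isVertexCut_neighborSet hb.2 hb.1)

lemma superConnected_of_exists_neighborSet_subset [Finite V] (hκ : H.vConn ≤ H.minDeg)
    (h : ∀ S, H.IsMinVertexCut S → ∃ a, H.neighborSet a ⊆ S) : H.SuperConnected := by
  intro S hS
  obtain ⟨a, ha⟩ := h S hS
  have hdeg := minDeg_le_ncard_neighborSet (H := H) a
  have hle := Set.ncard_le_ncard ha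
  have hcard := hS.2
  exact ⟨a, by omega, (Set.eq_of_subset_of_ncard_le ha (by omega)).symm⟩

end SimpleGraph

lemma Set.sum_ncard_inter_preimage {V γ : Type*} [Fintype γ] {S : Set V} (hS : S.Finite)
    (f : V → γ) : ∑ c, (S ∩ f ⁻¹' {c}).ncard = S.ncard := by
  classical
  rw [Set.ncard_eq_toFinset_card S hS,
    Finset.card_eq_sum_card_fiberwise (f := f) (t := Finset.univ) (fun _ _ => Finset.mem_univ _)]
  refine Finset.sum_congr rfl fun c _ => ?_
  rw [← Set.ncard_coe_finset]
  congr 1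
  ext x
  simp

lemma Fintype.eq_ite_of_sum_le_two_mul {ι : Type*} [Fintype ι] [DecidableEq ι] {s : ι → ℕ}
    {m : ℕ} (hsum : ∑ k, s k ≤ 2 * m) {i j : ι} (hij : i ≠ j) (hi : m ≤ s i) (hj : m ≤ s j)
    (k : ι) : s k = if k = i ∨ k = j then m else 0 := by
  have hpair := (Finset.sum_le_sum_of_subset (f := s) (Finset.subset_univ {i, j})).trans hsum
  rw [Finset.sum_pair hij] at hpair
  split_ifs with hk
  · rcases hk with rfl | rfl <;> omega
  · push Not at hk
    have := (Finset.sum_le_sum_of_subset (f := s) (Finset.subset_univ {k, i, j})).trans hsum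
    rw [Finset.sum_insert (by simp [hk.1, hk.2]), Finset.sum_pair hij] at this
    omega

namespace ZMod

variable {N : ℕ} [NeZero N]

lemma compl_subset_of_exit_mem {P E : Set (ZMod N)} (hP : P.Nonempty) (hE : E.Subsingleton)
    (hexit : ∀ c ∈ P, ∀ c', (c' = c + 1 ∨ c = c' + 1) → c' ∉ P → c' ∈ E) : Pᶜ ⊆ E := by
  classical
  intro q hq
  obtain ⟨p, hp⟩ := hP
  have hup : ∃ k : ℕ, q + k ∈ P := ⟨(p - q).val, by simpa using hp⟩
  have hdown : ∃ l : ℕ, q - l ∈ P := ⟨(q - p).val, by simpa using hp⟩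
  obtain ⟨k, hk⟩ : ∃ k, Nat.find hup = k + 1 :=
    Nat.exists_eq_succ_of_ne_zero fun h => hq (by simpa [h] using Nat.find_spec hup)
  obtain ⟨l, hl⟩ : ∃ l, Nat.find hdown = l + 1 :=
    Nat.exists_eq_succ_of_ne_zero fun h => hq (by simpa [h] using Nat.find_spec hdown)
  have hkP : q + (k + 1 : ℕ) ∈ P := hk ▸ Nat.find_spec hup
  have hlP : q - (l + 1 : ℕ) ∈ P := hl ▸ Nat.find_spec hdown
  have hkE : q + k ∈ E :=
    hexit _ hkP _ (Or.inr (by push_cast; ring)) (Nat.find_min hup (by omega))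
  have hlE : q - l ∈ E :=
    hexit _ hlP _ (Or.inl (by push_cast; ring)) (Nat.find_min hdown (by omega))
  obtain _ | l := l
  · simpa using hlE
  · -- walking down from `q` meets `P` one step earlier than it should
    refine absurd ?_ (Nat.find_min hdown (m := l) (by omega))
    have := hE hkE hlE
    rw [show q - (l : ℕ) = q - ((l + 1 : ℕ) : ZMod N) + 1 by push_cast; ring, ← this]
    simpa [add_assoc] using hkP

end ZMod

namespace SimpleGraph

variable {V : Type*} {H : SimpleGraph V} {N : ℕ} {L : V → ZMod N} {Z : Set (ZMod N)}

lemma reachable_of_mem_run (hsurj : Function.Surjective L)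
    (hblock : ∀ c ∈ Z, c + 1 ∈ Z → ∀ v w, (L v = c ∨ L v = c + 1) → (L w = c ∨ L w = c + 1) →
      H.Reachable v w)
    {e : ZMod N} {lo hi : ℕ} (hlt : lo < hi) (hZ : ∀ t, lo ≤ t → t ≤ hi → e + t ∈ Z) {v w : V}
    (hv : ∃ t, lo ≤ t ∧ t ≤ hi ∧ L v = e + t) (hw : ∃ t, lo ≤ t ∧ t ≤ hi ∧ L w = e + t) :
    H.Reachable v w := by
  obtain ⟨w₀, hw₀⟩ := hsurj (e + lo)
  suffices h : ∀ k, lo + k ≤ hi → ∀ v, L v = e + (lo + k : ℕ) → H.Reachable v w₀ by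
    obtain ⟨t, hlo, hhi, hvt⟩ := hv
    obtain ⟨t', hlo', hhi', hwt⟩ := hw
    exact (h (t - lo) (by omega) v (by rw [hvt, Nat.add_sub_cancel' hlo])).trans
      (h (t' - lo) (by omega) w (by rw [hwt, Nat.add_sub_cancel' hlo'])).symm
  intro k
  induction k with
  | zero =>
    intro _ v hv
    exact hblock _ (hZ lo le_rfl hlt.le) (by simpa [add_assoc] using hZ (lo + 1) (by omega) hlt)
      v w₀ (Or.inl hv) (Or.inl hw₀)
  | succ k ih =>
    intro hk v hv
    obtain ⟨y, hy⟩ := hsurj (e + (lo + k : ℕ))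
    refine (hblock _ (hZ _ (by omega) (by omega)) ?_ v y (Or.inr ?_) (Or.inl hy)).trans
      (ih (by omega) y hy)
    · simpa [add_assoc] using hZ (lo + (k + 1)) (by omega) hk
    · rw [hv]; push_cast; ring

lemma preconnected_of_defects_at [NeZero N] (hL : ∀ v w, H.Adj v w → L w = L v + 1 ∨ L v = L w + 1)
    (hsurj : Function.Surjective L) (hdeg : ∀ v, ∃ w, H.Adj v w)
    (hblock : ∀ c ∈ Z, c + 1 ∈ Z → ∀ v w, (L v = c ∨ L v = c + 1) → (L w = c ∨ L w = c + 1) →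
      H.Reachable v w)
    (hstep : ∀ v c, c ∈ Z → (c = L v + 1 ∨ L v = c + 1) → ∃ w, L w = c ∧ H.Reachable v w)
    {e : ZMod N} {d : ℕ} (hd : d + 3 ≤ N) (hZ : ∀ c ∉ Z, c = e ∨ c = e + d) :
    H.Preconnected := by
  have hlast : e + (N - 1 : ℕ) + 1 = e := by
    rw [Nat.cast_sub (by omega), ZMod.natCast_self]; ring
  have hmemZ : ∀ t : ℕ, t < N → t ≠ 0 → t ≠ d → e + t ∈ Z := by
    intro t ht ht0 htd
    by_contra hZt
    have hcast : ∀ s < N, (t : ZMod N) = s → t = s := fun s hs h => by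
      simpa [ZMod.val_natCast_of_lt ht, ZMod.val_natCast_of_lt hs] using congrArg ZMod.val h
    rcases hZ _ hZt with h | h
    · exact ht0 (hcast 0 (by omega) (by simpa using h))
    · exact htd (hcast d (by omega) (add_left_cancel h))
  -- every vertex reaches `x`, through the arc of layers `e + d + 1, …, e - 1`
  obtain ⟨x, hx⟩ := hsurj e
  have harc : ∀ v t, d < t → t < N → L v = e + t → H.Reachable v x := by
    intro v t hdt htN hv
    obtain ⟨w, hw, hxw⟩ := hstep x _ (hmemZ (N - 1) (by omega) (by omega) (by omega))
      (Or.inr (hx.trans hlast.symm))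
    refine (reachable_of_mem_run hsurj hblock (lo := d + 1) (hi := N - 1) (by omega)
      (fun t _ _ => hmemZ t (by omega) (by omega) (by omega)) ⟨t, by omega, by omega, hv⟩
      ⟨N - 1, by omega, le_rfl, hw⟩).trans hxw.symm
  have hfirst : ∀ v, L v = e → H.Reachable v x := by
    intro v hv
    obtain ⟨w, hw, hvw⟩ := hstep v _ (hmemZ (N - 1) (by omega) (by omega) (by omega))
      (Or.inr (hv.trans hlast.symm))
    exact hvw.trans (harc w (N - 1) (by omega) (by omega) hw)
  have hsecond : ∀ v, L v = e + d → H.Reachable v x := by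
    intro v hv
    obtain ⟨w, hw, hvw⟩ := hstep v _ (hmemZ (d + 1) (by omega) (by omega) (by omega))
      (Or.inl (by rw [hv]; push_cast; ring))
    exact hvw.trans (harc w (d + 1) (by omega) (by omega) hw)
  have hinner : ∀ v t, 0 < t → t < d → L v = e + t → H.Reachable v x := by
    intro v t ht0 htd hv
    rcases Nat.lt_or_ge d 3 with hd3 | hd3
    · -- a single layer between the defects: leave it along any edge
      obtain ⟨w, hvw⟩ := hdeg v
      refine hvw.reachable.trans ((hL v w hvw).elim (fun h => hsecond w ?_) (fun h => hfirst w ?_))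
      · rw [h, hv, show d = t + 1 by omega]; push_cast; ring
      · rw [show t = 1 by omega] at hv
        exact add_right_cancel (h.symm.trans (by rw [hv]; push_cast; ring))
    · obtain ⟨w, hw, hxw⟩ := hstep x (e + (1 : ℕ)) (hmemZ 1 (by omega) (by omega) (by omega))
        (Or.inl (by rw [hx]; push_cast; ring))
      exact (reachable_of_mem_run hsurj hblock (lo := 1) (hi := d - 1) (by omega)
        (fun t _ _ => hmemZ t (by omega) (by omega) (by omega)) ⟨t, by omega, by omega, hv⟩
        ⟨1, le_rfl, by omega, hw⟩).trans hxw.symm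
  have key : ∀ v, H.Reachable v x := by
    intro v
    have hv : L v = e + (L v - e).val := by simp
    rcases Nat.lt_trichotomy (L v - e).val d with htd | htd | htd
    · rcases Nat.eq_zero_or_pos (L v - e).val with ht0 | ht0
      · exact hfirst v (by simpa [ht0] using hv)
      · exact hinner v _ ht0 htd hv
    · exact hsecond v (htd ▸ hv)
    · exact harc v _ htd (ZMod.val_lt _) hv
  exact fun v w => (key v).trans (key w).symm

lemma preconnected_of_two_defects [NeZero N] (hN : 5 ≤ N)
    (hL : ∀ v w, H.Adj v w → L w = L v + 1 ∨ L v = L w + 1)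
    (hsurj : Function.Surjective L) (hdeg : ∀ v, ∃ w, H.Adj v w)
    (hblock : ∀ c ∈ Z, c + 1 ∈ Z → ∀ v w, (L v = c ∨ L v = c + 1) → (L w = c ∨ L w = c + 1) →
      H.Reachable v w)
    (hstep : ∀ v c, c ∈ Z → (c = L v + 1 ∨ L v = c + 1) → ∃ w, L w = c ∧ H.Reachable v w)
    {e₁ e₂ : ZMod N} (hZ : ∀ c ∉ Z, c = e₁ ∨ c = e₂) : H.Preconnected := by
  have h₁₂ : e₂ = e₁ + (e₂ - e₁).val := by simp
  have h₂₁ : e₁ = e₂ + (e₁ - e₂).val := by simp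
  -- one of the two arcs between the defects has at least two layers
  have hval := (e₂ - e₁).val_lt
  have hneg := ZMod.neg_val (e₂ - e₁)
  rw [neg_sub] at hneg
  by_cases hd : (e₂ - e₁).val + 3 ≤ N
  · exact preconnected_of_defects_at hL hsurj hdeg hblock hstep hd fun c hc => h₁₂ ▸ hZ c hc
  · refine preconnected_of_defects_at hL hsurj hdeg hblock hstep (e := e₂) (d := (e₁ - e₂).val)
      ?_ fun c hc => (h₂₁ ▸ hZ c hc).symm
    split_ifs at hneg <;> omega

end SimpleGraph

namespace SimpleGraph.IsBipartition

variable {G : SimpleGraph α} {X Y : Set α}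

lemma mem_left_iff (hbip : G.IsBipartition X Y) (v : α) : v ∈ X ↔ v ∉ Y := by
  have hv : v ∈ X ∪ Y := hbip.2.1 ▸ Set.mem_univ v
  exact ⟨fun hX hY => Set.disjoint_left.1 hbip.1 hX hY, hv.resolve_right⟩

lemma mem_right_iff_of_adj (hbip : G.IsBipartition X Y) {u v : α} (h : G.Adj u v) :
    u ∈ Y ↔ v ∉ Y := by
  rcases hbip.2.2 u v h with ⟨hu, hv⟩ | ⟨hu, hv⟩
  · exact iff_of_false ((hbip.mem_left_iff u).1 hu) (not_not.2 hv)
  · exact iff_of_true hu ((hbip.mem_left_iff v).1 hv)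

lemma ncard_add_ncard [Finite α] (hbip : G.IsBipartition X Y) :
    X.ncard + Y.ncard = Nat.card α := by
  rw [← Set.ncard_union_eq hbip.1, hbip.2.1, Set.ncard_univ]

end SimpleGraph.IsBipartition

namespace TildeG

open scoped Classical

def twice {n : ℕ} (i : ZMod n) : ZMod (2 * n) := ((2 * i.val : ℕ) : ZMod (2 * n))

/-- The vertices of `X × {i}` form layer `2i` and those of `Y × {i}` layer `2i + 1` of the cycle
`ZMod (2n)`; the edges of `G̃ₙ` join consecutive layers. -/
noncomputable def layer (Y : Set α) (n : ℕ) (a : α × ZMod n) : ZMod (2 * n) :=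
  twice a.2 + if a.1 ∈ Y then 1 else 0

/-- The copy of `G` on the layers `c` and `c + 1`: this is `Hᵢ` for `c = 2i` and `Hᵢ'` for
`c = 2i + 1`. -/
noncomputable def copy (Y : Set α) (n : ℕ) (c : ZMod (2 * n)) (v : α) : α × ZMod n :=
  (v, (((c + if v ∈ Y then 0 else 1).val / 2 : ℕ) : ZMod n))

def parity (n : ℕ) : ZMod (2 * n) →+* ZMod 2 := ZMod.castHom (dvd_mul_right 2 n) (ZMod 2)

variable {G : SimpleGraph α} {X Y : Set α} {n : ℕ}

lemma natCast_two_mul_eq_iff {a b : ℕ} :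
    ((2 * a : ℕ) : ZMod (2 * n)) = ((2 * b : ℕ) : ZMod (2 * n)) ↔ (a : ZMod n) = b := by
  rw [ZMod.natCast_eq_natCast_iff, ZMod.natCast_eq_natCast_iff,
    Nat.ModEq.mul_left_cancel_iff' two_ne_zero]

lemma parity_twice (i : ZMod n) : parity n (twice i) = 0 := by
  rw [twice, parity, map_natCast, Nat.cast_mul]
  exact mul_eq_zero_of_left rfl _

lemma parity_add_one (c : ZMod (2 * n)) : parity n (c + 1) ≠ parity n c := by
  rw [map_add, map_one]
  exact fun h => one_ne_zero (add_eq_left.1 h)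

lemma eq_of_parity_eq {c x y : ZMod (2 * n)} (hx : x = c ∨ x = c + 1) (hy : y = c ∨ y = c + 1)
    (h : parity n x = parity n y) : x = y := by
  rcases hx with rfl | rfl <;> rcases hy with rfl | rfl
  · rfl
  · exact absurd h.symm (parity_add_one x)
  · exact absurd h (parity_add_one y)
  · rfl

lemma parity_layer (a : α × ZMod n) :
    parity n (layer Y n a) = if a.1 ∈ Y then 1 else 0 := by
  rw [layer, map_add, parity_twice, zero_add]
  split_ifs <;> simp

lemma layer_copy_ne (hbip : G.IsBipartition X Y) {u v : α} (h : G.Adj u v) (c : ZMod (2 * n)) :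
    layer Y n (copy Y n c u) ≠ layer Y n (copy Y n c v) := by
  intro heq
  have hp := congrArg (parity n) heq
  rw [parity_layer, parity_layer] at hp
  have := hbip.mem_right_iff_of_adj h
  by_cases hu : u ∈ Y <;> by_cases hv : v ∈ Y <;> simp_all [copy]

lemma copy_injective (c : ZMod (2 * n)) : Function.Injective (copy Y n c) :=
  fun _ _ h => congrArg Prod.fst h

variable [NeZero n]

lemma twice_natCast (k : ℕ) : twice (k : ZMod n) = ((2 * k : ℕ) : ZMod (2 * n)) :=
  natCast_two_mul_eq_iff.2 (ZMod.natCast_zmod_val _)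

lemma twice_inj {i j : ZMod n} : twice i = twice j ↔ i = j := by
  rw [twice, twice, natCast_two_mul_eq_iff, ZMod.natCast_zmod_val, ZMod.natCast_zmod_val]

lemma twice_add_one (i : ZMod n) : twice (i + 1) = twice i + 2 := by
  rw [← ZMod.natCast_zmod_val i, ← Nat.cast_succ, twice_natCast, twice_natCast]
  push_cast
  ring

lemma twice_div_two_add_mod_two (e : ZMod (2 * n)) :
    twice ((e.val / 2 : ℕ) : ZMod n) + ((e.val % 2 : ℕ) : ZMod (2 * n)) = e := by
  rw [twice_natCast, ← Nat.cast_add, Nat.div_add_mod, ZMod.natCast_zmod_val]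

lemma layer_copy (c : ZMod (2 * n)) (v : α) :
    layer Y n (copy Y n c v) = c ∨ layer Y n (copy Y n c v) = c + 1 := by
  set e := c + if v ∈ Y then 0 else 1
  have hlayer : layer Y n (copy Y n c v) =
      e - ((e.val % 2 : ℕ) : ZMod (2 * n)) + if v ∈ Y then 1 else 0 := by
    rw [← eq_sub_of_add_eq (twice_div_two_add_mod_two e)]; rfl
  rcases Nat.mod_two_eq_zero_or_one e.val with h | h <;> by_cases hv : v ∈ Y <;>
    rw [hlayer, h] <;> simp [hv, e]

lemma eq_of_fst_eq {a b : α × ZMod n} {c : ZMod (2 * n)} (h : a.1 = b.1)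
    (ha : layer Y n a = c ∨ layer Y n a = c + 1) (hb : layer Y n b = c ∨ layer Y n b = c + 1) :
    a = b := by
  have hl := eq_of_parity_eq ha hb (by rw [parity_layer, parity_layer, h])
  rw [layer, layer, h, add_left_inj, twice_inj] at hl
  exact Prod.ext h hl

lemma copy_eq_self {a : α × ZMod n} {c : ZMod (2 * n)}
    (ha : layer Y n a = c ∨ layer Y n a = c + 1) : copy Y n c a.1 = a :=
  eq_of_fst_eq rfl (layer_copy c a.1) ha

lemma tildeG_adj_iff (hbip : G.IsBipartition X Y) {a b : α × ZMod n} :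
    (tildeG G X Y n).Adj a b ↔
      G.Adj a.1 b.1 ∧ (layer Y n b = layer Y n a + 1 ∨ layer Y n a = layer Y n b + 1) := by
  refine and_congr_right fun h => ?_
  rcases hbip.2.2 _ _ h with ⟨ha, hb⟩ | ⟨ha, hb⟩
  · simp [layer, ha, hb, (hbip.mem_left_iff _).1 ha, add_assoc, one_add_one_eq_two,
      ← twice_add_one, twice_inj, eq_comm]
  · simp [layer, ha, hb, (hbip.mem_left_iff _).1 hb, add_assoc, one_add_one_eq_two,
      ← twice_add_one, twice_inj]
    exact or_comm.trans (or_congr Iff.rfl eq_comm)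

lemma layer_adj (hbip : G.IsBipartition X Y) {a b : α × ZMod n} (h : (tildeG G X Y n).Adj a b) :
    layer Y n b = layer Y n a + 1 ∨ layer Y n a = layer Y n b + 1 :=
  ((tildeG_adj_iff hbip).1 h).2

lemma copy_adj (hbip : G.IsBipartition X Y) {u v : α} (h : G.Adj u v) (c : ZMod (2 * n)) :
    (tildeG G X Y n).Adj (copy Y n c u) (copy Y n c v) := by
  have hne := layer_copy_ne hbip h c
  refine (tildeG_adj_iff hbip).2 ⟨h, ?_⟩
  rcases layer_copy (Y := Y) c u with hu | hu <;> rcases layer_copy (Y := Y) c v with hv | hv <;>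
    simp_all

lemma neighborSet_subset (hbip : G.IsBipartition X Y) (a : α × ZMod n) :
    (tildeG G X Y n).neighborSet a ⊆
      copy Y n (layer Y n a) '' G.neighborSet a.1 ∪
        copy Y n (layer Y n a - 1) '' G.neighborSet a.1 := by
  intro b hb
  obtain ⟨hG, hl | hl⟩ := (tildeG_adj_iff hbip).1 hb
  · exact Or.inl ⟨b.1, hG, copy_eq_self (Or.inr hl)⟩
  · exact Or.inr ⟨b.1, hG, copy_eq_self (Or.inl (eq_sub_of_add_eq hl.symm))⟩

lemma minDeg_tildeG_le [Finite α] [Nonempty α] (hbip : G.IsBipartition X Y) :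
    (tildeG G X Y n).minDeg ≤ 2 * G.minDeg := by
  obtain ⟨x, hx⟩ := exists_ncard_neighborSet_eq_minDeg (H := G)
  have hsub := neighborSet_subset hbip ((x, 0) : α × ZMod n)
  calc (tildeG G X Y n).minDeg ≤ ((tildeG G X Y n).neighborSet (x, 0)).ncard :=
        minDeg_le_ncard_neighborSet _
    _ ≤ _ := Set.ncard_le_ncard hsub
    _ ≤ _ := Set.ncard_union_le _ _
    _ = 2 * G.minDeg := by
        rw [Set.ncard_image_of_injective _ (copy_injective _),
          Set.ncard_image_of_injective _ (copy_injective _), hx, two_mul]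

lemma minDeg_le_ncard_neighborSet_inter_layer [Finite α] (hbip : G.IsBipartition X Y)
    {w : α × ZMod n} {c : ZMod (2 * n)} (hc : c = layer Y n w + 1 ∨ layer Y n w = c + 1) :
    G.minDeg ≤ ((tildeG G X Y n).neighborSet w ∩ layer Y n ⁻¹' {c}).ncard := by
  -- `w` and its neighbours in layer `c` lie in a common copy of `G`
  obtain ⟨c₀, hw, hc₀⟩ :
      ∃ c₀, (layer Y n w = c₀ ∨ layer Y n w = c₀ + 1) ∧ (c = c₀ ∨ c = c₀ + 1) := by
    rcases hc with hc | hc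
    · exact ⟨_, Or.inl rfl, Or.inr hc⟩
    · exact ⟨c, Or.inr hc, Or.inl rfl⟩
  have hcw : parity n c ≠ parity n (layer Y n w) := by
    rcases hc with hc | hc <;> rw [hc]
    · exact parity_add_one _
    · exact (parity_add_one _).symm
  have hsub : copy Y n c₀ '' G.neighborSet w.1 ⊆
      (tildeG G X Y n).neighborSet w ∩ layer Y n ⁻¹' {c} := by
    rintro _ ⟨u, hu, rfl⟩
    have hne := layer_copy_ne hbip hu c₀
    rw [copy_eq_self hw] at hne
    refine ⟨copy_eq_self hw ▸ copy_adj hbip hu c₀, eq_of_parity_eq (layer_copy c₀ u) hc₀ ?_⟩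
    have hr : parity n (layer Y n (copy Y n c₀ u)) ≠ parity n (layer Y n w) :=
      fun h => hne (eq_of_parity_eq hw (layer_copy c₀ u) h.symm)
    exact (by decide : ∀ p q r : ZMod 2, r ≠ q → p ≠ q → r = p) _ _ _ hr hcw
  calc G.minDeg ≤ (G.neighborSet w.1).ncard := minDeg_le_ncard_neighborSet _
    _ = (copy Y n c₀ '' G.neighborSet w.1).ncard :=
        (Set.ncard_image_of_injective _ (copy_injective _)).symm
    _ ≤ _ := Set.ncard_le_ncard hsub

variable [Finite α]

lemma le_ncard_layer (hbip : G.IsBipartition X Y) {m : ℕ} (hX : m ≤ X.ncard) (hY : m ≤ Y.ncard)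
    (c : ZMod (2 * n)) : m ≤ (layer Y n ⁻¹' {c}).ncard := by
  have hc : ∀ v, parity n c = (if v ∈ Y then 1 else 0) → copy Y n c v ∈ layer Y n ⁻¹' {c} :=
    fun v hv => eq_of_parity_eq (layer_copy c v) (Or.inl rfl) (by rw [parity_layer, hv]; rfl)
  have hside : ∀ W : Set α, (∀ v ∈ W, parity n c = if v ∈ Y then 1 else 0) →
      W.ncard ≤ (layer Y n ⁻¹' {c}).ncard := fun W hW => by
    rw [← Set.ncard_image_of_injective W (copy_injective c)]
    exact Set.ncard_le_ncard (Set.image_subset_iff.2 fun v hv => hc v (hW v hv))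
  rcases (by decide : ∀ p : ZMod 2, p = 0 ∨ p = 1) (parity n c) with h | h
  · exact hX.trans (hside X fun v hv => by rw [h, if_neg ((hbip.mem_left_iff v).1 hv)])
  · exact hY.trans (hside Y fun v hv => by rw [h, if_pos hv])

lemma exists_layer_eq_notMem (hbip : G.IsBipartition X Y) (hX : G.minDeg + 1 ≤ X.ncard)
    (hY : G.minDeg + 1 ≤ Y.ncard) {S : Set (α × ZMod n)} {c : ZMod (2 * n)}
    (hS : (S ∩ layer Y n ⁻¹' {c}).ncard ≤ G.minDeg) : ∃ a, layer Y n a = c ∧ a ∉ S := by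
  obtain ⟨a, ha, haS⟩ : (layer Y n ⁻¹' {c} \ S).Nonempty := by
    refine Set.nonempty_of_ncard_ne_zero fun h0 => ?_
    have := Set.ncard_inter_add_ncard_sdiff_eq_ncard (layer Y n ⁻¹' {c}) S
    rw [Set.inter_comm] at this
    have := le_ncard_layer hbip hX hY c
    omega
  exact ⟨a, ha, haS⟩

lemma exists_adj_of_ncard_lt (hbip : G.IsBipartition X Y) {S : Set (α × ZMod n)}
    {w : α × ZMod n} {c : ZMod (2 * n)} (hc : c = layer Y n w + 1 ∨ layer Y n w = c + 1)
    (hS : (S ∩ layer Y n ⁻¹' {c}).ncard < G.minDeg) :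
    ∃ b, layer Y n b = c ∧ b ∉ S ∧ (tildeG G X Y n).Adj w b := by
  by_contra! h
  have hsub : (tildeG G X Y n).neighborSet w ∩ layer Y n ⁻¹' {c} ⊆ S ∩ layer Y n ⁻¹' {c} :=
    fun b hb => ⟨not_not.1 fun hbS => h b hb.2 hbS hb.1, hb.2⟩
  have := (minDeg_le_ncard_neighborSet_inter_layer hbip hc).trans (Set.ncard_le_ncard hsub)
  omega

lemma reachable_of_ncard_add_lt_vConn (hbip : G.IsBipartition X Y) {S : Set (α × ZMod n)}
    {c : ZMod (2 * n)}
    (hS : (S ∩ layer Y n ⁻¹' {c}).ncard + (S ∩ layer Y n ⁻¹' {c + 1}).ncard < G.vConn)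
    {a b : ↥Sᶜ} (ha : layer Y n a = c ∨ layer Y n a = c + 1)
    (hb : layer Y n b = c ∨ layer Y n b = c + 1) :
    ((tildeG G X Y n).induce Sᶜ).Reachable a b := by
  set T := copy Y n c ⁻¹' S
  have hT : T.ncard < G.vConn := by
    refine lt_of_le_of_lt ?_ hS
    rw [← Set.ncard_image_of_injective T (copy_injective c)]
    refine (Set.ncard_le_ncard fun x hx => ?_).trans (Set.ncard_union_le _ _)
    obtain ⟨v, hv, rfl⟩ := hx
    exact (layer_copy c v).imp (fun h => ⟨hv, h⟩) (fun h => ⟨hv, h⟩)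
  let f : G.induce Tᶜ →g (tildeG G X Y n).induce Sᶜ :=
    { toFun v := ⟨copy Y n c v, v.2⟩
      map_rel' h := copy_adj hbip h c }
  have hmem : ∀ z : ↥Sᶜ, (layer Y n z = c ∨ layer Y n z = c + 1) → z.1.1 ∈ Tᶜ :=
    fun z hz hzT => z.2 (copy_eq_self hz ▸ hzT)
  have hf : ∀ z hz, f ⟨z.1.1, hmem z hz⟩ = z := fun z hz => Subtype.ext (copy_eq_self hz)
  have := ((connected_induce_compl_of_ncard_lt_vConn hT).preconnected
    ⟨_, hmem a ha⟩ ⟨_, hmem b hb⟩).map f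
  rwa [hf a ha, hf b hb] at this

lemma reachable_of_subsingleton_heavy (hbip : G.IsBipartition X Y) (hκδ : G.vConn ≤ G.minDeg)
    (hk : 2 * G.minDeg < n * G.vConn) {S : Set (α × ZMod n)} (hS : S.ncard ≤ 2 * G.minDeg)
    (hheavy : {c | G.minDeg ≤ (S ∩ layer Y n ⁻¹' {c}).ncard}.Subsingleton) (u v : ↥Sᶜ) :
    ((tildeG G X Y n).induce Sᶜ).Reachable u v := by
  set s : ZMod (2 * n) → ℕ := fun c => (S ∩ layer Y n ⁻¹' {c}).ncard
  by_contra huv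
  -- the layers met by the component of `z`
  let J : ↥Sᶜ → Set (ZMod (2 * n)) :=
    fun z => {c | ∃ w : ↥Sᶜ, layer Y n w = c ∧ ((tildeG G X Y n).induce Sᶜ).Reachable z w}
  have hJ : ∀ z, (J z)ᶜ ⊆ {c | G.minDeg ≤ s c} := by
    intro z
    refine ZMod.compl_subset_of_exit_mem ⟨_, z, rfl, .rfl⟩ hheavy ?_
    rintro _ ⟨w, rfl, hzw⟩ c hc hcJ
    by_contra hlt
    obtain ⟨b, hb, hbS, hwb⟩ := exists_adj_of_ncard_lt hbip hc (not_le.1 hlt)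
    exact hcJ ⟨⟨b, hbS⟩, hb, hzw.trans (Adj.reachable (G := (tildeG G X Y n).induce Sᶜ) hwb)⟩
  have hbad : ∀ c, G.vConn ≤ s c + s (c + 1) := by
    intro c
    by_cases hc : G.minDeg ≤ s c
    · omega
    obtain ⟨wu, hwu, hu⟩ : c ∈ J u := not_not.1 fun h => hc (hJ u h)
    obtain ⟨wv, hwv, hv⟩ : c ∈ J v := not_not.1 fun h => hc (hJ v h)
    by_contra hlt
    exact huv (hu.trans ((reachable_of_ncard_add_lt_vConn hbip (not_le.1 hlt) (Or.inl hwu)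
      (Or.inl hwv)).trans hv.symm))
  have hsum := Finset.sum_le_sum fun c (_ : c ∈ Finset.univ) => hbad c
  rw [Finset.sum_const, Finset.card_univ, ZMod.card, smul_eq_mul, Finset.sum_add_distrib,
    Fintype.sum_equiv (Equiv.addRight 1) (fun c => s (c + 1)) s fun _ => rfl,
    Set.sum_ncard_inter_preimage (Set.toFinite S)] at hsum
  nlinarith

lemma preconnected_of_two_heavy (hbip : G.IsBipartition X Y) (hn : 3 ≤ n)
    (hX : G.minDeg + 1 ≤ X.ncard) (hY : G.minDeg + 1 ≤ Y.ncard) (hκ : 0 < G.vConn)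
    (hδ : 0 < G.minDeg) {S : Set (α × ZMod n)} (hS : S.ncard ≤ 2 * G.minDeg)
    (hiso : ∀ a ∉ S, ∃ b, (tildeG G X Y n).Adj a b ∧ b ∉ S) {e₁ e₂ : ZMod (2 * n)}
    (hne : e₁ ≠ e₂) (h₁ : G.minDeg ≤ (S ∩ layer Y n ⁻¹' {e₁}).ncard)
    (h₂ : G.minDeg ≤ (S ∩ layer Y n ⁻¹' {e₂}).ncard) :
    ((tildeG G X Y n).induce Sᶜ).Preconnected := by
  set s : ZMod (2 * n) → ℕ := fun c => (S ∩ layer Y n ⁻¹' {c}).ncard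
  have hs : ∀ c, s c = if c = e₁ ∨ c = e₂ then G.minDeg else 0 :=
    Fintype.eq_ite_of_sum_le_two_mul ((Set.sum_ncard_inter_preimage (Set.toFinite S) _).trans_le hS)
      hne h₁ h₂
  refine preconnected_of_two_defects (L := fun v => layer Y n v.1) (Z := {c | s c = 0})
    (by omega) (fun v w h => layer_adj hbip h) (fun c => ?_) (fun v => ?_)
    (fun c hc hc' v w hv hw => ?_) (fun v c hc hvc => ?_) (e₁ := e₁) (e₂ := e₂) fun c hc => ?_
  · obtain ⟨a, ha, haS⟩ := exists_layer_eq_notMem (S := S) hbip hX hY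
      (show s c ≤ _ by rw [hs c]; split_ifs <;> omega)
    exact ⟨⟨a, haS⟩, ha⟩
  · obtain ⟨b, hb, hbS⟩ := hiso v.1 v.2
    exact ⟨⟨b, hbS⟩, hb⟩
  · have h0 : s c + s (c + 1) = 0 := by rw [show s c = 0 from hc, show s (c + 1) = 0 from hc']
    exact reachable_of_ncard_add_lt_vConn (S := S) hbip (h0 ▸ hκ) hv hw
  · obtain ⟨b, hb, hbS, hvb⟩ :=
      exists_adj_of_ncard_lt (S := S) hbip hvc (show s c < _ from hc ▸ hδ)
    exact ⟨⟨b, hbS⟩, hb, Adj.reachable (G := (tildeG G X Y n).induce Sᶜ) hvb⟩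
  · by_contra! h
    exact hc ((hs c).trans (if_neg (not_or.2 h)))

lemma connected_induce_compl (hbip : G.IsBipartition X Y) (hn : 3 ≤ n)
    (hX : G.minDeg + 1 ≤ X.ncard) (hY : G.minDeg + 1 ≤ Y.ncard) (hκδ : G.vConn ≤ G.minDeg)
    (hk : 2 * G.minDeg < n * G.vConn) {S : Set (α × ZMod n)} (hS : S.ncard ≤ 2 * G.minDeg)
    (hiso : ∀ a ∉ S, ∃ b, (tildeG G X Y n).Adj a b ∧ b ∉ S) :
    ((tildeG G X Y n).induce Sᶜ).Connected := by
  have hκ : 0 < G.vConn := Nat.pos_of_ne_zero fun h => by simp [h] at hk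
  rw [connected_iff]
  refine ⟨?_, ?_⟩
  · by_cases hheavy : {c | G.minDeg ≤ (S ∩ layer Y n ⁻¹' {c}).ncard}.Subsingleton
    · exact reachable_of_subsingleton_heavy hbip hκδ hk hS hheavy
    · obtain ⟨e₁, h₁, e₂, h₂, hne⟩ := Set.not_subsingleton_iff.1 hheavy
      exact preconnected_of_two_heavy hbip hn hX hY hκ (hκ.trans_le hκδ) hS hiso hne h₁ h₂
  · refine (Set.nonempty_compl.2 fun hSuniv => ?_).to_subtype
    have hcard := hbip.ncard_add_ncard
    rw [hSuniv, Set.ncard_univ, Nat.card_prod, Nat.card_zmod] at hS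
    nlinarith

end TildeG

theorem stmt_6_general (G : SimpleGraph α) (X Y : Set α)
    (hbip : G.IsBipartition X Y) (n : ℕ) (hn : 3 ≤ n)
    (hX : G.minDeg + 1 ≤ X.ncard) (hY : G.minDeg + 1 ≤ Y.ncard)
    (hk : 2 * G.minDeg < n * G.vConn) :
    (tildeG G X Y n).SuperConnected := by
  have : Finite α := finite_of_vConn_pos (H := G) (Nat.pos_of_ne_zero fun h => by simp [h] at hk)
  have : NeZero n := ⟨by omega⟩
  have hcard := hbip.ncard_add_ncard
  have : Nonempty α := (Nat.card_pos_iff.1 (by omega)).1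
  have hκδ : G.vConn ≤ G.minDeg := vConn_le_minDeg (by omega)
  have hδ := TildeG.minDeg_tildeG_le (n := n) hbip
  have hκ' : (tildeG G X Y n).vConn ≤ (tildeG G X Y n).minDeg := by
    refine vConn_le_minDeg ?_
    rw [Nat.card_prod, Nat.card_zmod]
    nlinarith
  refine superConnected_of_exists_neighborSet_subset hκ' fun S hS => ?_
  by_contra! h
  exact hS.1 (TildeG.connected_induce_compl hbip hn hX hY hκδ hk (hS.2 ▸ hκ'.trans hδ)
    fun a _ => Set.not_subset.1 (h a))

/-- If |X| ≥ δ(G)+1, |Y| ≥ δ(G)+1 and κ(G) > (2/n)·δ(G), then G̃ₙ is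
super connected. -/
theorem stmt_6 (G : SimpleGraph α) (X Y : Set α)
    (hGc : G.Connected) (hbip : G.IsBipartition X Y) (n : ℕ) (hn : 3 ≤ n)
    (hX : G.minDeg + 1 ≤ X.ncard) (hY : G.minDeg + 1 ≤ Y.ncard)
    (hk : 2 * G.minDeg < n * G.vConn) :
    (tildeG G X Y n).SuperConnected :=
  stmt_6_general G X Y hbip n hn hX hY hk
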